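/- For frame-extended Hoare triples with precise invariant: let r be a precise predicate, and suppose c satisfies {p*r}{q*r} and c' satisfies {p'*r}{q'*r} (in the sense that for h in the precondition, wrong ∉ c(h) and c(h) is contained in the postcondition). Then con(c,c') satisfies {(p ∩ p')*r}{(q ∩ q')*r}. -/

import Mathlib

/-- Locations are positive integers. -/
abbrev Loc := ℕ+

/-- A heap is a finite partial function from locations to integers. -/
abbrev Heap := Finmap (fun _ : Loc => ℤ)

/-- Separating conjunction of predicates over heaps. -/
def sep (p q : Set Heap) : Set Heap :=
  {h | ∃ h1 h2 : Heap, h1.Disjoint h2 ∧ h1 ∈ p ∧ h2 ∈ q ∧ h = h1 ∪ h2}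

/-- The predicate containing only the empty heap. -/
def emp : Set Heap := {∅}

/-- A predicate is precise when every heap has at most one subheap in it. -/
def Precise (r : Set Heap) : Prop :=
  ∀ h h0 h1 : Heap,
    (∃ h0' : Heap, h0.Disjoint h0' ∧ h0 ∪ h0' = h) →
    (∃ h1' : Heap, h1.Disjoint h1' ∧ h1 ∪ h1' = h) →
    h0 ∈ r → h1 ∈ r → h0 = h1

/-- A command maps a heap to a set of outcomes: `none` is `wrong`,
`some h'` is a resulting heap. -/
abbrev Cmd := Heap → Set (Option Heap)

/-- Safety monotonicity. -/
def SafetyMono (c : Cmd) : Prop :=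
  ∀ h h0 : Heap, h.Disjoint h0 → none ∉ c h → none ∉ c (h ∪ h0)

/-- The frame property. -/
def FrameProp (c : Cmd) : Prop :=
  ∀ h h0 h1' : Heap, h.Disjoint h0 → none ∉ c h → some h1' ∈ c (h ∪ h0) →
    ∃ h' : Heap, h'.Disjoint h0 ∧ h1' = h' ∪ h0 ∧ some h' ∈ c h

/-- A command `c` satisfies the Hoare triple `{p}{q}`. -/
def Triple (p : Set Heap) (c : Cmd) (q : Set Heap) : Prop :=
  ∀ h ∈ p, none ∉ c h ∧ ∀ h' : Heap, some h' ∈ c h → h' ∈ q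

/-- The conjunction-combining operation on commands. -/
def con (c c' : Cmd) : Cmd := fun h =>
  {o | (o = none ∧ (none ∈ c h ∨ none ∈ c' h)) ∨
       (∃ h' : Heap, o = some h' ∧ some h' ∈ c h ∧ some h' ∈ c' h)}

lemma union_cancel_right {a b c : Heap} (ha : a.Disjoint c) (hb : b.Disjoint c)
    (h : a ∪ c = b ∪ c) : a = b := by
  apply Finmap.ext_lookup
  intro x
  by_cases hx : x ∈ c
  · have hxa : x ∉ a := fun hxa => ha x hxa hx
    have hxb : x ∉ b := fun hxb => hb x hxb hx
    simp [Finmap.lookup_eq_none.2 hxa, Finmap.lookup_eq_none.2 hxb]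
  · have := congrArg (Finmap.lookup x) h
    rwa [Finmap.lookup_union_left_of_not_in hx, Finmap.lookup_union_left_of_not_in hx] at this

theorem con_conjunction_rule_framed {p q p' q' r : Set Heap} {c c' : Cmd}
    (hr : Precise r)
    (hc : Triple (sep p r) c (sep q r)) (hc' : Triple (sep p' r) c' (sep q' r)) :
    Triple (sep (p ∩ p') r) (con c c') (sep (q ∩ q') r) := by
  intro h hh
  obtain ⟨h1, h2, hdisj, ⟨hp, hp'⟩, hrmem, rfl⟩ := hh
  have hmem : h1 ∪ h2 ∈ sep p r := ⟨h1, h2, hdisj, hp, hrmem, rfl⟩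
  have hmem' : h1 ∪ h2 ∈ sep p' r := ⟨h1, h2, hdisj, hp', hrmem, rfl⟩
  obtain ⟨hn, hpost⟩ := hc _ hmem
  obtain ⟨hn', hpost'⟩ := hc' _ hmem'
  constructor
  · intro hcon
    rcases hcon with ⟨_, h1 | h2⟩ | ⟨h', heq, _⟩
    · exact hn h1
    · exact hn' h2
    · exact nomatch heq
  · intro h' hmem''
    rcases hmem'' with ⟨heq, _⟩ | ⟨h'', heq, hin, hin'⟩
    · exact nomatch heq
    obtain rfl : h' = h'' := Option.some.inj heq
    obtain ⟨a, b, hab, haq, hbr, hEq⟩ := hpost _ hin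
    obtain ⟨a', b', hab', haq', hbr', hEq'⟩ := hpost' _ hin'
    have hbb : b = b' := hr h' b b'
      ⟨a, fun x hx hx' => hab x hx' hx, by rw [Finmap.union_comm_of_disjoint (Finmap.Disjoint.symm _ _ hab)]; exact hEq.symm⟩
      ⟨a', fun x hx hx' => hab' x hx' hx, by rw [Finmap.union_comm_of_disjoint (Finmap.Disjoint.symm _ _ hab')]; exact hEq'.symm⟩
      hbr hbr'
    subst hbb
    have haa : a = a' := union_cancel_right hab hab' (hEq ▸ hEq')
    subst haa
    exact ⟨a, b, hab, ⟨haq, haq'⟩, hbr, hEq⟩
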